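/- arXiv:2210.02699 — 2 statements merged into one kernel-verified Lean document; each statement's English description precedes it below -/
import Mathlib

section
/- Let K, G, H be groupoids, let g : K ⥤ G be a fully faithful functor, and let h : K ⥤ H be any functor. Then the data (P, g', h', α) of the pushout of G and H over K (a groupoid P with functors g' : G ⥤ P, h' : H ⥤ P and a natural isomorphism α : h ⋙ h' ≅ g ⋙ g' satisfying the universal property: for every groupoid F, functors g₁ : G ⥤ F, h₁ : H ⥤ F and natural isomorphism β : h ⋙ h₁ ≅ g ⋙ g₁ there is a unique functor f : P ⥤ F with g' ⋙ f = g₁, h' ⋙ f = h₁ and whiskering of α by f equal to β) can be chosen so that, in addition, h' : H ⥤ P is fully faithful, and if g is moreover essentially surjective (hence a weak equivalence), then h' is also essentially surjective (hence a weak equivalence). -/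
/-!
The pushout is presented by generators and relations: paths of morphisms of `G`, of `H` and of
glue edges `h k ⇄ g k`, modulo composition in `G` and `H`, invertibility and naturality of the
glue. Its universal property, into any category, then holds by construction.

For `x : H`, the universal property with target `Type` gives a functor `normalForm x` modelling
`Hom(inr x, -)`: it is `Hom(x, -)` on `H`, and on `b : G` it consists of formal composites
`x ⟶ h k ≅ g k ⟶ b` modulo sliding morphisms of `K` through the glue. Because `g` is fully
faithful, every such composite into some `g k` collapses back to a morphism `x ⟶ h k`, which is what
makes the glue component of `normalForm x` invertible. By a Yoneda-type argument, checked edge by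
edge along paths, every `ψ : inr x ⟶ v` is recovered from `normalForm x` applied to `ψ` and `𝟙 x`;
for `v = inr y` this inverts `inr.map`.
-/

open CategoryTheory Opposite

universe u

namespace Paper

namespace Pushout

variable {K G H : Type u} [Category.{u} K] [Category.{u} G] [Category.{u} H]
  (g : K ⥤ G) (h : K ⥤ H)

inductive Vertex (g : K ⥤ G) (h : K ⥤ H) : Type u
  | inl : G → Vertex g h
  | inr : H → Vertex g h

inductive Edge : Vertex g h → Vertex g h → Type u
  | inl {a b : G} (f : a ⟶ b) : Edge (.inl a) (.inl b)
  | inr {x y : H} (φ : x ⟶ y) : Edge (.inr x) (.inr y)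
  | glue (k : K) : Edge (.inr (h.obj k)) (.inl (g.obj k))
  | unglue (k : K) : Edge (.inl (g.obj k)) (.inr (h.obj k))

instance : Quiver (Vertex g h) := ⟨Edge g h⟩

abbrev Edge.toPath {v w : Vertex g h} (e : Edge g h v w) :
    (Paths.of (Vertex g h)).obj v ⟶ (Paths.of (Vertex g h)).obj w :=
  (Paths.of (Vertex g h)).map e

inductive Rel : HomRel (Paths (Vertex g h))
  | inl_id (a : G) : Rel (Edge.inl (𝟙 a)).toPath (𝟙 _)
  | inl_comp {a b c : G} (f : a ⟶ b) (f' : b ⟶ c) :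
      Rel ((Edge.inl f).toPath ≫ (Edge.inl f').toPath) (Edge.inl (f ≫ f')).toPath
  | inr_id (x : H) : Rel (Edge.inr (𝟙 x)).toPath (𝟙 _)
  | inr_comp {x y z : H} (φ : x ⟶ y) (φ' : y ⟶ z) :
      Rel ((Edge.inr φ).toPath ≫ (Edge.inr φ').toPath) (Edge.inr (φ ≫ φ')).toPath
  | glue_unglue (k : K) :
      Rel ((Edge.glue k).toPath ≫ (Edge.unglue k).toPath) (𝟙 _)
  | unglue_glue (k : K) :
      Rel ((Edge.unglue k).toPath ≫ (Edge.glue k).toPath) (𝟙 _)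
  | glue_naturality {k k' : K} (f : k ⟶ k') :
      Rel ((Edge.glue k).toPath ≫ (Edge.inl (g.map f)).toPath)
        ((Edge.inr (h.map f)).toPath ≫ (Edge.glue k').toPath)

end Pushout

abbrev Pushout {K G H : Type u} [Category.{u} K] [Category.{u} G] [Category.{u} H]
    (g : K ⥤ G) (h : K ⥤ H) : Type u :=
  CategoryTheory.Quotient (Pushout.Rel g h)

namespace Pushout

section Construction

variable {K G H : Type u} [Category.{u} K] [Category.{u} G] [Category.{u} H]
  (g : K ⥤ G) (h : K ⥤ H)

abbrev quot : Paths (Vertex g h) ⥤ Pushout g h := CategoryTheory.Quotient.functor _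

-- Going through `Paths.of` keeps the argument of `quot` in `Paths (Vertex g h)` on the nose:
-- `(quot g h).obj v` with `v : Vertex g h` typechecks only up to unfolding `Paths`, which
-- breaks `rw`.
abbrev mk (v : Vertex g h) : Pushout g h := (quot g h).obj ((Paths.of (Vertex g h)).obj v)

abbrev edge {v w : Vertex g h} (e : Edge g h v w) : mk g h v ⟶ mk g h w :=
  (quot g h).map e.toPath

variable {g h} in
theorem edge_comp_edge_of_rel {u v w : Vertex g h} {e : Edge g h u v} {e' : Edge g h v w}
    {p : (Paths.of (Vertex g h)).obj u ⟶ (Paths.of (Vertex g h)).obj w}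
    (r : Rel g h (e.toPath ≫ e'.toPath) p) :
    edge g h e ≫ edge g h e' = (quot g h).map p :=
  ((quot g h).map_comp _ _).symm.trans (CategoryTheory.Quotient.sound _ r)

def inl : G ⥤ Pushout g h where
  obj a := mk g h (.inl a)
  map f := edge g h (.inl f)
  map_id a := CategoryTheory.Quotient.sound _ (.inl_id a)
  map_comp f f' := (edge_comp_edge_of_rel (.inl_comp f f')).symm

def inr : H ⥤ Pushout g h where
  obj x := mk g h (.inr x)
  map φ := edge g h (.inr φ)
  map_id x := CategoryTheory.Quotient.sound _ (.inr_id x)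
  map_comp φ φ' := (edge_comp_edge_of_rel (.inr_comp φ φ')).symm

def glue : h ⋙ inr g h ≅ g ⋙ inl g h :=
  NatIso.ofComponents
    (fun k => ⟨edge g h (.glue k), edge g h (.unglue k),
      (edge_comp_edge_of_rel (.glue_unglue k)).trans ((quot g h).map_id _),
      (edge_comp_edge_of_rel (.unglue_glue k)).trans ((quot g h).map_id _)⟩)
    (fun f => ((edge_comp_edge_of_rel (.glue_naturality f)).trans ((quot g h).map_comp _ _)).symm)

theorem inr_map_comp_glue_hom {k k' : K} (f : k ⟶ k') :
    (inr g h).map (h.map f) ≫ (glue g h).hom.app k' =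
      (glue g h).hom.app k ≫ (inl g h).map (g.map f) :=
  (glue g h).hom.naturality f

section Lift

variable {C : Type*} [Category* C] (g₁ : G ⥤ C) (h₁ : H ⥤ C) (β : h ⋙ h₁ ≅ g ⋙ g₁)

def liftPrefunctor : Vertex g h ⥤q C where
  obj
    | .inl a => g₁.obj a
    | .inr x => h₁.obj x
  map
    | .inl f => g₁.map f
    | .inr φ => h₁.map φ
    | .glue k => β.hom.app k
    | .unglue k => β.inv.app k

theorem pathsLift_map_toPath {v w : Vertex g h} (e : Edge g h v w) :
    (Paths.lift (liftPrefunctor g h g₁ h₁ β)).map e.toPath = (liftPrefunctor g h g₁ h₁ β).map e :=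
  Paths.lift_toPath (liftPrefunctor g h g₁ h₁ β) e

def lift : Pushout g h ⥤ C :=
  CategoryTheory.Quotient.lift _ (Paths.lift (liftPrefunctor g h g₁ h₁ β)) (by
    intro _ _ _ _ r
    cases r <;> simp only [Functor.map_comp, pathsLift_map_toPath]
    case inl_id a => exact g₁.map_id a
    case inl_comp f f' => exact (g₁.map_comp f f').symm
    case inr_id x => exact h₁.map_id x
    case inr_comp φ φ' => exact (h₁.map_comp φ φ').symm
    case glue_unglue k => exact β.hom_inv_id_app k
    case unglue_glue k => exact β.inv_hom_id_app k
    case glue_naturality f => exact (β.hom.naturality f).symm)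

@[simp]
theorem lift_map_edge {v w : Vertex g h} (e : Edge g h v w) :
    (lift g h g₁ h₁ β).map (edge g h e) = (liftPrefunctor g h g₁ h₁ β).map e :=
  pathsLift_map_toPath g h g₁ h₁ β e

theorem lift_map_inl_map {a b : G} (f : a ⟶ b) :
    (lift g h g₁ h₁ β).map ((inl g h).map f) = g₁.map f :=
  lift_map_edge g h g₁ h₁ β (.inl f)

theorem lift_map_inr_map {x y : H} (φ : x ⟶ y) :
    (lift g h g₁ h₁ β).map ((inr g h).map φ) = h₁.map φ :=
  lift_map_edge g h g₁ h₁ β (.inr φ)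

theorem inl_comp_lift : inl g h ⋙ lift g h g₁ h₁ β = g₁ :=
  CategoryTheory.Functor.ext (fun _ => rfl) fun _ _ f => by
    erw [eqToHom_refl, eqToHom_refl, Category.comp_id, Category.id_comp]
    exact lift_map_inl_map g h g₁ h₁ β f

theorem inr_comp_lift : inr g h ⋙ lift g h g₁ h₁ β = h₁ :=
  CategoryTheory.Functor.ext (fun _ => rfl) fun _ _ φ => by
    erw [eqToHom_refl, eqToHom_refl, Category.comp_id, Category.id_comp]
    exact lift_map_inr_map g h g₁ h₁ β φ

theorem lift_map_glue (k : K) : (lift g h g₁ h₁ β).map ((glue g h).hom.app k) = β.hom.app k :=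
  lift_map_edge g h g₁ h₁ β (.glue k)

theorem whiskerRight_glue_lift :
    Functor.whiskerRight (glue g h).hom (lift g h g₁ h₁ β) =
      eqToHom (by rw [Functor.assoc, inr_comp_lift]) ≫ β.hom ≫
        eqToHom (by rw [Functor.assoc, inl_comp_lift]) := by
  ext k
  simp only [NatTrans.comp_app, eqToHom_app, Functor.whiskerRight_app, lift_map_glue]
  erw [eqToHom_refl, eqToHom_refl, Category.id_comp, Category.comp_id]

theorem lift_unique (F : Pushout g h ⥤ C) (e₁ : inl g h ⋙ F = g₁) (e₂ : inr g h ⋙ F = h₁)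
    (hF : Functor.whiskerRight (glue g h).hom F =
      eqToHom (by rw [Functor.assoc, e₂]) ≫ β.hom ≫ eqToHom (by rw [Functor.assoc, e₁])) :
    F = lift g h g₁ h₁ β := by
  subst e₁ e₂
  have hβ (k : K) : F.map ((glue g h).hom.app k) = β.hom.app k := by
    have hk := NatTrans.congr_app hF k
    simp only [NatTrans.comp_app, eqToHom_app, Functor.whiskerRight_app] at hk
    erw [eqToHom_refl, eqToHom_refl, Category.id_comp, Category.comp_id] at hk
    exact hk
  have hobj : (quot g h ⋙ F).obj = (Paths.lift (liftPrefunctor g h _ _ β)).obj :=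
    funext fun v => by cases v <;> rfl
  refine CategoryTheory.Quotient.lift_unique _ _ _ _ (Paths.ext_functor hobj ?_)
  rintro _ _ (f | φ | k | k) <;>
    erw [eqToHom_refl, eqToHom_refl, Category.comp_id, Category.id_comp, pathsLift_map_toPath]
  · rfl
  · rfl
  · exact hβ k
  · exact congrArg Iso.inv (Iso.ext (hβ k).symm : β.app k = F.mapIso ((glue g h).app k)).symm

end Lift

section FullyFaithful

variable (x : H)

-- The formal composite `inr.map fst ≫ glue.app obj ≫ inl.map snd : inr x ⟶ inl b`.
structure GlueComposite (b : G) : Type u where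
  obj : K
  fst : x ⟶ h.obj obj
  snd : g.obj obj ⟶ b

def GlueComposite.Rel {b : G} (m m' : GlueComposite g h x b) : Prop :=
  ∃ f : m.obj ⟶ m'.obj, m'.fst = m.fst ≫ h.map f ∧ m.snd = g.map f ≫ m'.snd

def normalFormInl : G ⥤ Type u where
  obj b := Quot (GlueComposite.Rel g h x (b := b))
  map f := TypeCat.ofHom <| Quot.map (fun m => ⟨m.obj, m.fst, m.snd ≫ f⟩) <| by
    rintro m m' ⟨f', hfst, hsnd⟩
    exact ⟨f', hfst, by rw [hsnd, Category.assoc]⟩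
  map_id b := by ext ⟨m⟩; simp [Quot.map]
  map_comp f f' := by ext ⟨m⟩; simp [Quot.map]

@[simp]
theorem normalFormInl_map_mk {b b' : G} (f : b ⟶ b') (m : GlueComposite g h x b) :
    (normalFormInl g h x).map f (Quot.mk _ m) = Quot.mk _ ⟨m.obj, m.fst, m.snd ≫ f⟩ :=
  rfl

noncomputable def toHomInl (b : G) :
    Quot (GlueComposite.Rel g h x (b := b)) → ((inr g h).obj x ⟶ (inl g h).obj b) :=
  Quot.lift (fun m => (inr g h).map m.fst ≫ (glue g h).hom.app m.obj ≫ (inl g h).map m.snd) <| by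
    rintro m m' ⟨f, hfst, hsnd⟩
    simp [hfst, hsnd, reassoc_of% inr_map_comp_glue_hom]

@[simp]
theorem toHomInl_mk {b : G} (m : GlueComposite g h x b) :
    toHomInl g h x b (Quot.mk _ m) =
      (inr g h).map m.fst ≫ (glue g h).hom.app m.obj ≫ (inl g h).map m.snd :=
  rfl

theorem toHomInl_comp_inl_map {b b' : G} (n : Quot (GlueComposite.Rel g h x (b := b)))
    (f : b ⟶ b') :
    toHomInl g h x b n ≫ (inl g h).map f = toHomInl g h x b' ((normalFormInl g h x).map f n) := by
  induction n using Quot.ind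
  simp

variable [g.Full] [g.Faithful]

noncomputable def glueCompositeEquiv (k : K) :
    (x ⟶ h.obj k) ≃ Quot (GlueComposite.Rel g h x (b := g.obj k)) where
  toFun q := Quot.mk _ ⟨k, q, 𝟙 _⟩
  invFun := Quot.lift (fun m => m.fst ≫ h.map (g.preimage m.snd)) <| by
    rintro m m' ⟨f, hfst, hsnd⟩
    rw [hfst, hsnd, Functor.preimage_comp, Functor.preimage_map, h.map_comp, Category.assoc]
  left_inv q := by simp
  right_inv := by
    rintro ⟨m⟩
    exact (Quot.sound ⟨g.preimage m.snd, rfl, by simp⟩).symm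

noncomputable def normalFormIso : h ⋙ coyoneda.obj (op x) ≅ g ⋙ normalFormInl g h x :=
  NatIso.ofComponents (fun k => (glueCompositeEquiv g h x k).toIso)
    (fun f => by ext q; exact (Quot.sound ⟨f, rfl, by simp⟩).symm)

noncomputable def normalForm : Pushout g h ⥤ Type u :=
  lift g h (normalFormInl g h x) (coyoneda.obj (op x)) (normalFormIso g h x)

theorem inr_map_comp_glue_hom_app (k : K) (q : x ⟶ h.obj k) :
    (inr g h).map q ≫ (glue g h).hom.app k =
      toHomInl g h x (g.obj k) (glueCompositeEquiv g h x k q) := by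
  simp [toHomInl, glueCompositeEquiv]

theorem toHomInl_comp_glue_inv_app (k : K) (n : Quot (GlueComposite.Rel g h x (b := g.obj k))) :
    toHomInl g h x (g.obj k) n ≫ (glue g h).inv.app k =
      (inr g h).map ((glueCompositeEquiv g h x k).symm n) := by
  induction n using Quot.ind with | mk m => ?_
  obtain ⟨k', q, p⟩ := m
  obtain ⟨f, rfl⟩ := g.map_surjective p
  simp [glueCompositeEquiv, ← reassoc_of% inr_map_comp_glue_hom]

noncomputable def toHom : ∀ {v : Vertex g h},
    (normalForm g h x).obj (mk g h v) → ((inr g h).obj x ⟶ mk g h v)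
  | .inl b => toHomInl g h x b
  | .inr _ => (inr g h).map

theorem toHom_comp_edge {v w : Vertex g h} (n : (normalForm g h x).obj (mk g h v))
    (e : Edge g h v w) :
    toHom g h x n ≫ edge g h e = toHom g h x ((normalForm g h x).map (edge g h e) n) := by
  erw [lift_map_edge]
  cases e with
  | inl f => exact toHomInl_comp_inl_map g h x n f
  | inr φ => exact ((inr g h).map_comp n φ).symm
  | glue k => exact inr_map_comp_glue_hom_app g h x k n
  | unglue k => exact toHomInl_comp_glue_inv_app g h x k n

theorem toHom_normalForm_map_quot_map {v : Paths (Vertex g h)}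
    (p : (Paths.of (Vertex g h)).obj (.inr x) ⟶ v) :
    toHom g h x (v := v) ((normalForm g h x).map ((quot g h).map p) (𝟙 x)) = (quot g h).map p := by
  induction p using Paths.induction_fixed_source with
  | id => exact (inr g h).map_id x
  | comp p e ih =>
    rw [(quot g h).map_comp, Functor.map_comp]
    erw [types_comp_apply, ← toHom_comp_edge, ih]
    rfl

noncomputable def inrFullyFaithful : (inr g h).FullyFaithful where
  preimage {y _} ψ := (normalForm g h y).map ψ (𝟙 y)
  map_preimage {y _} ψ := by
    obtain ⟨p, rfl⟩ := (quot g h).map_surjective ψ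
    exact toHom_normalForm_map_quot_map g h y p
  preimage_map {_ _} φ := by
    simp only [normalForm, lift_map_inr_map]
    exact Category.id_comp φ

end FullyFaithful

instance inr_essSurj [g.EssSurj] : (inr g h).EssSurj where
  mem_essImage := by
    rintro ⟨a | y⟩
    · exact ⟨h.obj (g.objPreimage a),
        ⟨(glue g h).app _ ≪≫ (inl g h).mapIso (g.objObjPreimageIso a)⟩⟩
    · exact ⟨y, ⟨Iso.refl _⟩⟩

end Construction

section Groupoid

variable {K G H : Type u} [Category.{u} K] [Groupoid.{u} G] [Groupoid.{u} H]
  (g : K ⥤ G) (h : K ⥤ H)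

theorem isIso_edge {v w : Vertex g h} (e : Edge g h v w) : IsIso (edge g h e) := by
  cases e with
  | inl f => exact (inl g h).map_isIso f
  | inr φ => exact (inr g h).map_isIso φ
  | glue k => exact ((glue g h).app k).isIso_hom
  | unglue k => exact ((glue g h).app k).isIso_inv

theorem isIso {p q : Pushout g h} (ψ : p ⟶ q) : IsIso ψ := by
  induction ψ using CategoryTheory.Quotient.induction with
  | h f =>
    induction f using Paths.induction_fixed_source with
    | id => rw [(quot g h).map_id]; infer_instance
    | comp p e ih =>
      rw [(quot g h).map_comp]
      exact IsIso.comp_isIso' ih (isIso_edge g h e)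

noncomputable instance : Groupoid (Pushout g h) := Groupoid.ofIsIso (isIso g h)

end Groupoid

end Pushout

/-- the pushout of groupoids along a fully faithful functor can be
chosen so that `h'` is fully faithful, and essentially surjective whenever `g` is. -/
theorem groupoid_pushout_exists_fullyFaithful (K G H : Grpd.{u, u})
    (g : ↥K ⥤ ↥G) (h : ↥K ⥤ ↥H) (hgFull : g.Full) (hgFaithful : g.Faithful) :
    ∃ (P : Grpd.{u, u}) (g' : ↥G ⥤ ↥P) (h' : ↥H ⥤ ↥P) (α : h ⋙ h' ≅ g ⋙ g'),
      (h'.Full ∧ h'.Faithful ∧ (g.EssSurj → h'.EssSurj)) ∧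
      ∀ (F : Grpd.{u, u}) (g₁ : ↥G ⥤ ↥F) (h₁ : ↥H ⥤ ↥F) (β : h ⋙ h₁ ≅ g ⋙ g₁),
        ∃! f : ↥P ⥤ ↥F,
          ∃ (e₁ : g' ⋙ f = g₁) (e₂ : h' ⋙ f = h₁),
            Functor.whiskerRight α.hom f =
              eqToHom (by rw [Functor.assoc, e₂]) ≫ β.hom ≫
                eqToHom (by rw [Functor.assoc, e₁]) := by
  refine ⟨Grpd.of (Pushout g h), Pushout.inl g h, Pushout.inr g h, Pushout.glue g h,
    ⟨(Pushout.inrFullyFaithful g h).full, (Pushout.inrFullyFaithful g h).faithful,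
      fun _ => Pushout.inr_essSurj g h⟩, fun F g₁ h₁ β => ?_⟩
  refine ⟨Pushout.lift g h g₁ h₁ β,
    ⟨Pushout.inl_comp_lift g h g₁ h₁ β, Pushout.inr_comp_lift g h g₁ h₁ β, ?_⟩, ?_⟩
  · exact Pushout.whiskerRight_glue_lift g h g₁ h₁ β
  · rintro f ⟨e₁, e₂, hf⟩
    exact Pushout.lift_unique g h g₁ h₁ β f e₁ e₂ hf

end Paper
end

section
/- Let X be a Kan complex, m ≥ 0, and b an m-cycle in X. Then the relation ∼ on S(X,b) is an equivalence relation. -/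
/-!
Reflexivity is witnessed by `s₀ α`. Symmetry and transitivity both follow from the euclidean
property `α ∼ β → α ∼ γ → β ∼ γ`: given homotopies `H₁ : α ∼ β` and `H₂ : α ∼ γ`, the family
with `H₁`, `H₂` in positions `0`, `1` and the faces of the degenerate simplex `s₁ s₀ α` in
positions `≥ 3` is a compatible horn `Λ[m + 2, 2]`, and face `2` of a Kan filler is a homotopy
`β ∼ γ`. The condition on its faces `≥ 2` uses that homotopic simplices have the same boundary.
-/

open CategoryTheory Simplicial Opposite

universe u

namespace Paper

/-- A simplicial set has the Kan extension property for all horns. -/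
def IsKan (X : SSet.{u}) : Prop :=
  ∀ (m : ℕ), 0 < m → ∀ (i : Fin (m + 1)) (σ : (Λ[m, i] : SSet.{u}) ⟶ X),
    ∃ τ : Δ[m] ⟶ X, σ = Λ[m, i].ι ≫ τ

/-- `X` is an `n`-groupoid: every horn has a filler, unique in dimensions `≥ n+1`. -/
def IsNGroupoid (n : ℕ) (X : SSet.{u}) : Prop :=
  IsKan X ∧
    ∀ (m : ℕ), n + 1 ≤ m → ∀ (i : Fin (m + 1)) (τ τ' : Δ[m] ⟶ X),
      Λ[m, i].ι ≫ τ = Λ[m, i].ι ≫ τ' → τ = τ'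

/-- `X` is an `n`-category: every inner horn has a filler, unique in dimensions `≥ n+1`. -/
def IsNCategory (n : ℕ) (X : SSet.{u}) : Prop :=
  (∀ (m : ℕ) (i : Fin (m + 1)), 0 < (i : ℕ) → (i : ℕ) < m →
      ∀ (σ : (Λ[m, i] : SSet.{u}) ⟶ X), ∃ τ : Δ[m] ⟶ X, σ = Λ[m, i].ι ≫ τ) ∧
    ∀ (m : ℕ), n + 1 ≤ m → ∀ (i : Fin (m + 1)), 0 < (i : ℕ) → (i : ℕ) < m →
      ∀ (τ τ' : Δ[m] ⟶ X),
        Λ[m, i].ι ≫ τ = Λ[m, i].ι ≫ τ' → τ = τ'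

/-- Homotopy of `m`-simplices relative to the boundary: there is
`h ∈ X_{m+1}` with `d₀ h = α`, `d₁ h = β` and `dᵢ h = dᵢ (s₀ α)` for `2 ≤ i`. -/
def Htpy (X : SSet.{u}) {m : ℕ} (α β : X _⦋m⦌) : Prop :=
  ∃ h : X _⦋m + 1⦌, X.δ 0 h = α ∧ X.δ 1 h = β ∧
    ∀ i : Fin (m + 2), 2 ≤ (i : ℕ) → X.δ i h = X.δ i (X.σ 0 α)

/-- The constant `m`-simplex at a vertex `a`. -/
def constSimplex (X : SSet.{u}) (a : X _⦋0⦌) (m : ℕ) : X _⦋m⦌ :=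
  X.map (SimplexCategory.const ⦋m⦌ ⦋0⦌ 0).op a

/-- The cycle condition: `dᵢ x_j = d_{j-1} x_i` for `i < j`. -/
def IsCycle (X : SSet.{u}) : ∀ {m : ℕ}, (Fin (m + 2) → X.obj (op ⦋m⦌)) → Prop
| 0, _ => True
| m + 1, x =>
      ∀ (i j : ℕ) (hj : j < m + 3) (hij : i < j),
        X.δ ⟨i, by omega⟩ (x ⟨j, hj⟩) = X.δ ⟨j - 1, by omega⟩ (x ⟨i, by omega⟩)

/-- The type of `m`-cycles of `X`; by convention there is a unique `0`-cycle. -/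
def CycleType (X : SSet.{u}) : ℕ → Type u
| 0 => PUnit
| m + 1 => { x : Fin (m + 2) → X.obj (op ⦋m⦌) // IsCycle X x }

/-- `S(X, b)`: the set of `m`-simplices with boundary the cycle `b`
(all vertices, for `m = 0`). -/
def SSimp (X : SSet.{u}) : ∀ (m : ℕ), CycleType X m → Set (X _⦋m⦌)
| 0, _ => Set.univ
| m + 1, b => { α | ∀ i : Fin (m + 2), X.δ i α = b.1 i }

lemma map_delta {X Y : SSet.{u}} (f : X ⟶ Y) {n : ℕ} (i : Fin (n + 2)) (x : X _⦋n + 1⦌) :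
    f.app (op ⦋n⦌) (X.δ i x) = Y.δ i (f.app (op ⦋n + 1⦌) x) :=
  NatTrans.naturality_apply f (SimplexCategory.δ i).op x

lemma map_sigma {X Y : SSet.{u}} (f : X ⟶ Y) {n : ℕ} (i : Fin (n + 1)) (x : X _⦋n⦌) :
    f.app (op ⦋n + 1⦌) (X.σ i x) = Y.σ i (f.app (op ⦋n⦌) x) :=
  NatTrans.naturality_apply f (SimplexCategory.σ i).op x

lemma map_const {X Y : SSet.{u}} (f : X ⟶ Y) (a : X _⦋0⦌) (m : ℕ) :
    f.app (op ⦋m⦌) (constSimplex X a m) = constSimplex Y (f.app (op ⦋0⦌) a) m :=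
  NatTrans.naturality_apply f (SimplexCategory.const ⦋m⦌ ⦋0⦌ 0).op a

/-- The image of a cycle under a simplicial map. -/
def cycleMap {X Y : SSet.{u}} (f : X ⟶ Y) : ∀ {m : ℕ}, CycleType X m → CycleType Y m
| 0, _ => PUnit.unit.{u + 1}
| m + 1, b => ⟨fun i => f.app (op ⦋m⦌) (b.1 i), by
      cases m with
      | zero => trivial
      | succ m =>
        intro i j hj hij
        rw [← map_delta, ← map_delta, b.2 i j hj hij]⟩

lemma htpy_map {X Y : SSet.{u}} (f : X ⟶ Y) {m : ℕ} {α β : X _⦋m⦌} (h : Htpy X α β) :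
    Htpy Y (f.app (op ⦋m⦌) α) (f.app (op ⦋m⦌) β) := by
  obtain ⟨H, h0, h1, hrest⟩ := h
  refine ⟨f.app (op ⦋m + 1⦌) H, ?_, ?_, ?_⟩
  · rw [← map_delta, h0]
  · rw [← map_delta, h1]
  · intro i hi
    rw [← map_delta, hrest i hi, map_delta, map_sigma]

/-- `S_k(X, a)`: simplices all of whose faces are the constant simplex at `a`. -/
def SKset (X : SSet.{u}) (a : X _⦋0⦌) : (k : ℕ) → Set (X _⦋k⦌)
| 0 => Set.univ
| k + 1 => { α | ∀ i : Fin (k + 2), X.δ i α = constSimplex X a k }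

/-- The `k`-th homotopy set `π_k(X, a)`. -/
def piSet (X : SSet.{u}) (a : X _⦋0⦌) (k : ℕ) : Type u :=
  Quot (fun (α β : SKset X a k) => Htpy X α.1 β.1)

lemma skMap_mem {X Y : SSet.{u}} (f : X ⟶ Y) (a : X _⦋0⦌) (k : ℕ) (α : SKset X a k) :
    f.app (op ⦋k⦌) α.1 ∈ SKset Y (f.app (op ⦋0⦌) a) k := by
  cases k with
  | zero => trivial
  | succ k =>
    intro i
    rw [← map_delta f i α.1, α.2 i, map_const]

/-- The map induced on homotopy sets by a simplicial map. -/
def piMap {X Y : SSet.{u}} (f : X ⟶ Y) (a : X _⦋0⦌) (k : ℕ) :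
    piSet X a k → piSet Y (f.app (op ⦋0⦌) a) k :=
  Quot.lift (fun α => Quot.mk _ ⟨f.app (op ⦋k⦌) α.1, skMap_mem f a k α⟩)
    (fun _ _ h => Quot.sound (htpy_map f h))

/-- A weak equivalence of simplicial sets (Kan complexes): all induced maps on
homotopy sets are bijections. -/
def IsWeakEquiv {X Y : SSet.{u}} (f : X ⟶ Y) : Prop :=
  ∀ (a : X _⦋0⦌) (k : ℕ), Function.Bijective (piMap f a k)

section

open SSet

variable {X : SSet.{u}}

theorem IsKan.kanComplex (hX : IsKan X) : KanComplex X := by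
  refine KanComplex.iff.2 fun n i f hf => ?_
  obtain ⟨φ, hφ⟩ := hX (n + 1) n.succ_pos i hf.desc
  exact ⟨φ, fun j hj => by rw [← horn.ι_ι i j hj, Category.assoc, ← hφ, hf.ι_desc]⟩

theorem exists_filler_of_compatible_faces [KanComplex X] {n : ℕ} {i : Fin (n + 3)}
    (x : ∀ j : Fin (n + 3), j ≠ i → X _⦋n + 1⦌)
    (hx : ∀ j k (hj : j ≠ i) (hk : k ≠ i) (hjk : j < k),
      X.δ (k.pred (Fin.ne_zero_of_lt hjk)) (x j hj) =
        X.δ (j.castPred (Fin.ne_last_of_lt hjk)) (x k hk)) :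
    ∃ t : X _⦋n + 2⦌, ∀ j hj, X.δ j t = x j hj := by
  have hf : horn.IsCompatible fun j hj => yonedaEquiv.symm (x j hj) := fun j k hj hk hjk => by
    simp only [stdSimplex.δ_comp_yonedaEquiv_symm, hx j k hj hk hjk]
  obtain ⟨φ, hφ⟩ := hf.exists_lift_of_kanComplex
  exact ⟨yonedaEquiv φ, fun j hj => by
    rw [← stdSimplex.yonedaEquiv_δ_comp, hφ j hj, Equiv.apply_symm_apply]⟩

theorem δ_pred_δ_eq_δ_castPred_δ {n : ℕ} (x : X _⦋n + 2⦌) {j k : Fin (n + 3)} (hjk : j < k) :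
    X.δ (k.pred (Fin.ne_zero_of_lt hjk)) (X.δ j x) =
      X.δ (j.castPred (Fin.ne_last_of_lt hjk)) (X.δ k x) := by
  rw [δ_comp_δ'_apply (i := j.castPred (Fin.ne_last_of_lt hjk)) (by simpa using hjk)]
  simp only [Fin.castSucc_castPred]

theorem δ_σ_one_σ_zero_of_le_two {n : ℕ} (x : X _⦋n⦌) (i : Fin (n + 3)) (hi : (i : ℕ) ≤ 2) :
    X.δ i (X.σ 1 (X.σ 0 x)) = X.σ 0 x := by
  obtain rfl | rfl | rfl : i = 0 ∨ i = 1 ∨ i = 2 := by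
    simp only [Fin.ext_iff, Fin.val_zero, Fin.val_one, Fin.val_two]; omega
  · simpa [δ_comp_σ_self'_apply (S := X) (j := 0) (i := 0) rfl] using
      δ_comp_σ_of_le_apply (i := 0) (j := 0) le_rfl (X.σ 0 x)
  · exact δ_comp_σ_self_apply 1 _
  · exact δ_comp_σ_succ_apply 1 _

namespace Htpy

theorem refl {m : ℕ} (α : X _⦋m⦌) : Htpy X α α :=
  ⟨X.σ 0 α, δ_comp_σ_self_apply 0 α, δ_comp_σ_succ_apply 0 α, fun _ _ => rfl⟩

theorem δ_eq {m : ℕ} {α β : X _⦋m + 1⦌} (h : Htpy X α β) (i : Fin (m + 2)) :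
    X.δ i α = X.δ i β := by
  obtain ⟨H, rfl, rfl, hH⟩ := h
  cases i using Fin.cases with
  | zero => simpa using δ_comp_δ_self_apply (i := 0) H
  | succ i =>
    calc X.δ i.succ (X.δ 0 H)
        = X.δ 1 (X.σ 0 (X.δ i.succ (X.δ 0 H))) := (δ_comp_σ_succ_apply 0 _).symm
      _ = X.δ 1 (X.δ i.succ.succ (X.σ 0 (X.δ 0 H))) := by
        rw [← δ_comp_σ_of_gt_apply (j := 0) (Fin.succ_pos i)]; rfl
      _ = X.δ 1 (X.δ i.succ.succ H) := by rw [hH i.succ.succ (by simp)]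
      _ = X.δ i.succ (X.δ 1 H) := by
        simpa using δ_comp_δ_apply (i := 1) (j := i.succ) (by simp [Fin.le_def]) H

theorem δ_σ_zero_eq {m : ℕ} {α β : X _⦋m⦌} (h : Htpy X α β) (p : Fin (m + 2)) (hp : 2 ≤ (p : ℕ)) :
    X.δ p (X.σ 0 α) = X.δ p (X.σ 0 β) := by
  cases m with
  | zero => omega
  | succ m =>
    obtain ⟨q, rfl⟩ := p.eq_succ_of_ne_zero (by rintro rfl; simp at hp)
    have hq : Fin.castSucc 0 < q := by
      simp only [Fin.lt_def, Fin.val_castSucc, Fin.val_zero, Fin.val_succ] at hp ⊢; omega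
    rw [← Fin.castSucc_zero, δ_comp_σ_of_gt_apply hq, δ_comp_σ_of_gt_apply hq, h.δ_eq]

section Euclidean

variable {m : ℕ} (α : X _⦋m⦌) (H₁ H₂ : X _⦋m + 1⦌)

def euclideanHorn (j : Fin (m + 3)) : X _⦋m + 1⦌ :=
  if j = 0 then H₁ else if j = 1 then H₂ else X.δ j (X.σ 1 (X.σ 0 α))

variable {α H₁ H₂}

theorem δ_euclideanHorn (hH₁ : ∀ i : Fin (m + 2), 2 ≤ (i : ℕ) → X.δ i H₁ = X.δ i (X.σ 0 α))
    (hH₂ : ∀ i : Fin (m + 2), 2 ≤ (i : ℕ) → X.δ i H₂ = X.δ i (X.σ 0 α))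
    (j : Fin (m + 3)) (p : Fin (m + 2)) (hp : 2 ≤ (p : ℕ)) :
    X.δ p (euclideanHorn α H₁ H₂ j) = X.δ p (X.δ j (X.σ 1 (X.σ 0 α))) := by
  unfold euclideanHorn
  split_ifs with h0 h1
  · rw [hH₁ p hp, h0, δ_σ_one_σ_zero_of_le_two α 0 (by simp)]
  · rw [hH₂ p hp, h1, δ_σ_one_σ_zero_of_le_two α 1 (by simp)]
  · rfl

theorem euclideanHorn_compatible (h₀ : X.δ 0 H₁ = X.δ 0 H₂)
    (hH₁ : ∀ i : Fin (m + 2), 2 ≤ (i : ℕ) → X.δ i H₁ = X.δ i (X.σ 0 α))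
    (hH₂ : ∀ i : Fin (m + 2), 2 ≤ (i : ℕ) → X.δ i H₂ = X.δ i (X.σ 0 α))
    (j k : Fin (m + 3)) (hj : j ≠ 2) (hk : k ≠ 2) (hjk : j < k) :
    X.δ (k.pred (Fin.ne_zero_of_lt hjk)) (euclideanHorn α H₁ H₂ j) =
      X.δ (j.castPred (Fin.ne_last_of_lt hjk)) (euclideanHorn α H₁ H₂ k) := by
  by_cases h01 : j = 0 ∧ k = 1
  · obtain ⟨rfl, rfl⟩ := h01
    simpa [euclideanHorn] using h₀
  have hk3 : 3 ≤ (k : ℕ) := by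
    simp only [ne_eq, Fin.ext_iff, Fin.lt_def, Fin.val_zero, Fin.val_one, Fin.val_two]
      at hj hk hjk h01
    omega
  have hk : euclideanHorn α H₁ H₂ k = X.δ k (X.σ 1 (X.σ 0 α)) := by
    simp only [euclideanHorn, Fin.ext_iff, Fin.val_zero, Fin.val_one]
    rw [if_neg (by omega), if_neg (by omega)]
  rw [δ_euclideanHorn hH₁ hH₂ j _ (by simp; omega), hk, δ_pred_δ_eq_δ_castPred_δ _ hjk]

end Euclidean

theorem euclidean [KanComplex X] {m : ℕ} {α β γ : X _⦋m⦌} (h₁ : Htpy X α β) (h₂ : Htpy X α γ) :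
    Htpy X β γ := by
  have hαβ := h₁.δ_σ_zero_eq
  obtain ⟨H₁, hH₁0, hH₁1, hH₁⟩ := h₁
  obtain ⟨H₂, hH₂0, hH₂1, hH₂⟩ := h₂
  obtain ⟨t, ht⟩ := exists_filler_of_compatible_faces (i := 2)
    (fun j _ => euclideanHorn α H₁ H₂ j) (euclideanHorn_compatible (hH₁0.trans hH₂0.symm) hH₁ hH₂)
  have h0 : (0 : Fin (m + 3)) ≠ 2 := by simp [Fin.ext_iff, Nat.mod_eq_of_lt]
  have h1 : (1 : Fin (m + 3)) ≠ 2 := by simp [Fin.ext_iff, Nat.mod_eq_of_lt]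
  refine ⟨X.δ 2 t, ?_, ?_, fun p hp => ?_⟩
  · rw [← Fin.succ_one_eq_two, δ_comp_δ_apply (Fin.zero_le 1), Fin.castSucc_zero, ht 0 h0]
    simpa [euclideanHorn] using hH₁1
  · rw [← Fin.succ_one_eq_two, ← δ_comp_δ_self_apply, Fin.castSucc_one, ht 1 h1]
    simpa [euclideanHorn, h1] using hH₂1
  have h2p : (2 : Fin (m + 3)) < p.succ := by simp [Fin.lt_def, Nat.mod_eq_of_lt]; omega
  have h2 : ((2 : Fin (m + 3)).castPred (Fin.ne_last_of_lt h2p) : ℕ) = 2 := by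
    simp [Nat.mod_eq_of_lt]
  calc X.δ p (X.δ 2 t)
      = X.δ (Fin.castPred 2 (Fin.ne_last_of_lt h2p)) (X.δ p.succ t) := by
        simpa using δ_pred_δ_eq_δ_castPred_δ t h2p
    _ = X.δ (Fin.castPred 2 (Fin.ne_last_of_lt h2p)) (X.δ p.succ (X.σ 1 (X.σ 0 α))) := by
        rw [ht p.succ h2p.ne', δ_euclideanHorn hH₁ hH₂ _ _ h2.ge]
    _ = X.δ p (X.δ 2 (X.σ 1 (X.σ 0 α))) := by
        simpa using (δ_pred_δ_eq_δ_castPred_δ _ h2p).symm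
    _ = X.δ p (X.σ 0 α) := by rw [δ_σ_one_σ_zero_of_le_two α 2 (by simp [Nat.mod_eq_of_lt])]
    _ = X.δ p (X.σ 0 β) := hαβ p hp

theorem symm [KanComplex X] {m : ℕ} {α β : X _⦋m⦌} (h : Htpy X α β) : Htpy X β α :=
  h.euclidean (refl α)

theorem trans [KanComplex X] {m : ℕ} {α β γ : X _⦋m⦌} (h₁ : Htpy X α β) (h₂ : Htpy X β γ) :
    Htpy X α γ :=
  h₁.symm.euclidean h₂

end Htpy

end

/-- on a Kan complex, the homotopy relation on `S(X, b)` is an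
equivalence relation. -/
theorem htpy_equivalence (X : SSet.{u}) (hX : IsKan X) (m : ℕ) (b : CycleType X m) :
    Equivalence (fun α β : SSimp X m b => Htpy X α.1 β.1) := by
  have := hX.kanComplex
  exact ⟨fun α => Htpy.refl α.1, Htpy.symm, Htpy.trans⟩

end Paper
end
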